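/- Define rev : ℕ → ℕ on two-digit numbers by rev n = 10 * (n % 10) + n / 10. Then the 4×4 matrix R given by R i j = rev (M88 (3 - i) (3 - j)), where M88 has rows (52,11,5,20), (0,25,51,12), (21,2,10,55), (15,50,22,1), is a magic square with magic constant 88: every row, every column, and both main diagonals of R sum to 88. -/

import Mathlib

def M88 : Fin 4 → Fin 4 → ℕ :=
  ![![52, 11, 5, 20],
    ![0, 25, 51, 12],
    ![21, 2, 10, 55],
    ![15, 50, 22, 1]]

def rev (n : ℕ) : ℕ := 10 * (n % 10) + n / 10

def R : Fin 4 → Fin 4 → ℕ := fun i j => rev (M88 (3 - i) (3 - j))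

theorem R_eq :
    R = ![![10, 22, 5, 51],
          ![55, 1, 20, 12],
          ![21, 15, 52, 0],
          ![2, 50, 11, 25]] := by
  ext i j
  fin_cases i <;> fin_cases j <;> rfl

theorem R_magic :
    (∀ i : Fin 4, ∑ j, R i j = 88) ∧
    (∀ j : Fin 4, ∑ i, R i j = 88) ∧
    (∑ i, R i i = 88) ∧
    (∑ i : Fin 4, R i (3 - i) = 88) := by
  rw [R_eq]
  decide
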